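/- arXiv:2505.00552 — 2 statements merged into one kernel-verified Lean document; each statement's English description precedes it below -/
import Mathlib

section
/- Let m, n be positive integers with d ≤ min(m, n), let R̃ ∈ ℝ^{m×n}, and let R̃ = U Σ Vᵀ be a singular value decomposition, where U ∈ ℝ^{m×m} and V ∈ ℝ^{n×n} are orthogonal and Σ ∈ ℝ^{m×n} is rectangular-diagonal with diagonal entries σ_1 ≥ σ_2 ≥ … ≥ σ_{min(m,n)} ≥ 0 (set σ_i = 0 for i > min(m,n)). Let P = Σ_{i=1}^{d} σ_i u_i v_iᵀ be the rank-d truncated SVD of R̃ (the best rank-d Frobenius-norm approximation), where u_i, v_i denote the i-th columns of U and V. Then R̃ Pᵀ R̃ = R̃ · V · diag(h(λ_1), …, h(λ_n)) · Vᵀ, where λ_i := 1 − σ_i² is the eigenvalue of the item–item graph Laplacian L* := I_n − R̃ᵀ R̃ associated with eigenvector v_i, and h(λ_i) := (1 − λ_i) for i ≤ d and h(λ_i) := 0 for i > d. In other words, each row of the LGCN prediction R̂ = R̃ Pᵀ R̃ equals the graph spectral filtering of the corresponding row of R̃ over L* with the linear low-pass transfer function h(λ) = (1−λ)·𝟙[λ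 ≤ λ_d] cut off at the d-th smallest frequency. -/
open Matrix

lemma sum_castLE_aux {n d : ℕ} (h : d ≤ n) (f : Fin n → ℝ) :
    ∑ k : Fin d, f (Fin.castLE h k) = ∑ l : Fin n, if (l:ℕ) < d then f l else 0 := by
  rcases Nat.eq_zero_or_pos d with rfl | hd0
  · simp
  rw [← Finset.sum_filter]
  exact Finset.sum_nbij' (i := fun (k : Fin d) => Fin.castLE h k)
    (j := fun (l : Fin n) => ⟨(l : ℕ) % d, Nat.mod_lt _ hd0⟩)
    (fun k _ => by simp [Fin.isLt k])
    (fun l hl => Finset.mem_univ _)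
    (fun k _ => by ext; simp [Nat.mod_eq_of_lt k.isLt])
    (fun l hl => by
      simp only [Finset.mem_filter] at hl
      ext; simp [Nat.mod_eq_of_lt hl.2])
    (fun k _ => rfl)

lemma P_factor_aux {m n d : ℕ} (hd : d ≤ min m n)
    (U : Matrix (Fin m) (Fin m) ℝ) (V : Matrix (Fin n) (Fin n) ℝ)
    (S : Matrix (Fin m) (Fin n) ℝ) (σ : ℕ → ℝ)
    (hS : ∀ (i : Fin m) (j : Fin n), S i j = if (i : ℕ) = (j : ℕ) then σ (i : ℕ) else 0)
    (P : Matrix (Fin m) (Fin n) ℝ)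
    (hP : ∀ (i : Fin m) (j : Fin n), P i j =
        ∑ k : Fin d, σ (k : ℕ) * U i (Fin.castLE (le_trans hd (min_le_left _ _)) k) *
          V j (Fin.castLE (le_trans hd (min_le_right _ _)) k)) :
    P = U * S * Matrix.diagonal (fun j : Fin n => if (j:ℕ) < d then (1:ℝ) else 0) * Vᵀ := by
  have hdm : d ≤ m := le_trans hd (min_le_left _ _)
  have hdn : d ≤ n := le_trans hd (min_le_right _ _)
  ext i j
  rw [hP]
  set f : Fin n → ℝ := fun l =>
    σ (l:ℕ) * (if hl : (l:ℕ) < m then U i ⟨(l:ℕ), hl⟩ else 0) * V j l with hf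
  have step1 : (∑ k : Fin d, σ (k : ℕ) * U i (Fin.castLE hdm k) * V j (Fin.castLE hdn k))
      = ∑ k : Fin d, f (Fin.castLE hdn k) := by
    refine Finset.sum_congr rfl fun k _ => ?_
    have hk : ((Fin.castLE hdn k : Fin n) : ℕ) = (k : ℕ) := rfl
    simp only [hf, hk, dif_pos (lt_of_lt_of_le k.isLt hdm)]
    rfl
  rw [step1, sum_castLE_aux hdn f]
  simp only [mul_apply, diagonal_apply, transpose_apply, hS, mul_ite, mul_zero, mul_one,
    Finset.sum_ite_eq', Finset.mem_univ, if_true]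
  have inner : ∀ l : Fin n,
      (∑ k : Fin m, if (k:ℕ) = (l:ℕ) then U i k * σ (k:ℕ) else 0)
      = (if hl : (l:ℕ) < m then U i ⟨(l:ℕ), hl⟩ else 0) * σ (l:ℕ) := by
    intro l
    by_cases hl : (l:ℕ) < m
    · rw [Finset.sum_eq_single (⟨(l:ℕ), hl⟩ : Fin m)]
      · simp [hl]
      · intro k _ hk
        have : (k:ℕ) ≠ (l:ℕ) := fun h => hk (by ext; simpa using h)
        simp [this]
      · simp
    · rw [dif_neg hl, Finset.sum_eq_zero, zero_mul]
      intro k _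
      have : (k:ℕ) ≠ (l:ℕ) := by have := k.isLt; omega
      simp [this]
  refine Finset.sum_congr rfl fun l _ => ?_
  by_cases hld : (l:ℕ) < d
  · rw [if_pos hld, if_pos hld, inner l]
    simp only [hf]; ring
  · simp [hld]

lemma St_S_aux {m n : ℕ}
    (S : Matrix (Fin m) (Fin n) ℝ) (σ : ℕ → ℝ)
    (hσzero : ∀ i, min m n ≤ i → σ i = 0)
    (hS : ∀ (i : Fin m) (j : Fin n), S i j = if (i : ℕ) = (j : ℕ) then σ (i : ℕ) else 0) :
    Sᵀ * S = Matrix.diagonal (fun j : Fin n => σ (j:ℕ) ^ 2) := by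
  ext j l
  simp only [mul_apply, transpose_apply, hS, diagonal_apply, ite_mul, zero_mul]
  by_cases hj : (j:ℕ) < m
  · rw [Finset.sum_eq_single (⟨(j:ℕ), hj⟩ : Fin m)]
    · by_cases hjl : j = l
      · subst hjl; simp [pow_two]
      · have : (j:ℕ) ≠ (l:ℕ) := fun h => hjl (by ext; simpa using h)
        simp [this, hjl]
    · intro k _ hk
      have : (k:ℕ) ≠ (j:ℕ) := fun h => hk (by ext; simpa using h)
      simp [this]
    · simp
  · have hz : σ (j:ℕ) = 0 := hσzero _ (le_trans (min_le_left _ _) (not_lt.mp hj))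
    rw [Finset.sum_eq_zero, eq_comm]
    · simp [hz]
    · intro k _
      have : (k:ℕ) ≠ (j:ℕ) := by have := k.isLt; omega
      simp [this]

/-- LGCN prediction as linear low-pass graph spectral filtering with cutoff.
Given an SVD `R̃ = U Σ Vᵀ` (`U`, `V` orthogonal, `Σ` rectangular-diagonal with descending
nonnegative diagonal `σ_i`, set to zero beyond `min(m,n)`), and `P = Σ_{i=1}^{d} σ_i u_i v_iᵀ`
the rank-`d` truncated SVD (`d ≤ min(m,n)`), the LGCN prediction satisfies
`R̃ Pᵀ R̃ = R̃ · V · diag(h(λ_1), …, h(λ_n)) · Vᵀ`, where `λ_i = 1 - σ_i²` is the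
eigenvalue of the item–item Laplacian `L* = I - R̃ᵀ R̃` associated with eigenvector `v_i`,
and `h(λ_i) = 1 - λ_i` for `i ≤ d` while `h(λ_i) = 0` for `i > d` (i.e., the transfer
function `h(λ) = (1-λ)·𝟙[λ ≤ λ_d]` cut off at the `d`-th smallest frequency). -/
theorem stmt_0 {m n d : ℕ} (hd : d ≤ min m n)
    (Rt : Matrix (Fin m) (Fin n) ℝ)
    (U : Matrix (Fin m) (Fin m) ℝ) (V : Matrix (Fin n) (Fin n) ℝ)
    (S : Matrix (Fin m) (Fin n) ℝ) (σ : ℕ → ℝ)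
    (hU : Uᵀ * U = 1) (hU' : U * Uᵀ = 1) (hV : Vᵀ * V = 1) (hV' : V * Vᵀ = 1)
    (hσdesc : ∀ i j : ℕ, i ≤ j → σ j ≤ σ i) (hσnonneg : ∀ i, 0 ≤ σ i)
    (hσzero : ∀ i, min m n ≤ i → σ i = 0)
    (hS : ∀ (i : Fin m) (j : Fin n), S i j = if (i : ℕ) = (j : ℕ) then σ (i : ℕ) else 0)
    (hRt : Rt = U * S * Vᵀ)
    (P : Matrix (Fin m) (Fin n) ℝ)
    (hP : ∀ (i : Fin m) (j : Fin n), P i j =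
        ∑ k : Fin d, σ (k : ℕ) * U i (Fin.castLE (by omega : d ≤ m) k) *
          V j (Fin.castLE (by omega : d ≤ n) k)) :
    Rt * Pᵀ * Rt =
      Rt * V * Matrix.diagonal (fun i : Fin n =>
        if (i : ℕ) < d then 1 - (1 - σ (i : ℕ) ^ 2) else 0) * Vᵀ := by
  have hPf := P_factor_aux hd U V S σ hS P hP
  have hSS := St_S_aux S σ hσzero hS
  rw [hPf, hRt]
  simp only [transpose_mul, transpose_transpose, diagonal_transpose]
  simp only [Matrix.mul_assoc]
  simp only [← Matrix.mul_assoc Vᵀ V, hV, Matrix.one_mul]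
  simp only [← Matrix.mul_assoc Uᵀ U, hU, Matrix.one_mul]
  simp only [← Matrix.mul_assoc Sᵀ S, hSS]
  simp only [← Matrix.mul_assoc (Matrix.diagonal fun j : Fin n => if (j:ℕ) < d then (1:ℝ) else 0),
    diagonal_mul_diagonal]
  congr 2
  funext l
  by_cases hld : (l:ℕ) < d <;> simp [hld] <;> ring
end

section
/- (Eckart–Young–Mirsky lower bound.) Let D ∈ ℝ^{m×n} have singular values σ_1 ≥ σ_2 ≥ … ≥ σ_{min(m,n)} ≥ 0. Then for every r with 1 ≤ r ≤ min(m,n) − 1 and every matrix X ∈ ℝ^{m×n} with rank(X) ≤ r, one has ‖D − X‖_F² ≥ σ_{r+1}² + σ_{r+2}² + … + σ_{min(m,n)}², where ‖·‖_F denotes the Frobenius norm. -/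
open Matrix RealInnerProductSpace

/-- Abel-type bound: if `0 ≤ q i ≤ 1`, `∑_{i<m} q i ≤ r`, and `g` is a nonnegative
decreasing sequence, then `∑_{i<m} q i * g i ≤ ∑_{i<r} g i`. -/
lemma eym_key_sum (m r : ℕ) (hrm : r ≤ m) (q g : ℕ → ℝ)
    (hq0 : ∀ i, 0 ≤ q i) (hq1 : ∀ i, q i ≤ 1)
    (hqs : ∑ i ∈ Finset.range m, q i ≤ r)
    (gm : ∀ i j, i ≤ j → g j ≤ g i) (g0 : ∀ i, 0 ≤ g i) :
    ∑ i ∈ Finset.range m, q i * g i ≤ ∑ i ∈ Finset.range r, g i := by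
  have hsplit : Finset.range m = Finset.range r ∪ Finset.Ico r m := by
    rw [Finset.range_eq_Ico, Finset.range_eq_Ico]
    exact (Finset.Ico_union_Ico_eq_Ico (Nat.zero_le r) hrm).symm
  have hdisj : Disjoint (Finset.range r) (Finset.Ico r m) := by
    rw [Finset.range_eq_Ico]
    exact Finset.Ico_disjoint_Ico_consecutive 0 r m
  have h1 : ∑ i ∈ Finset.range m, q i * g i
      = ∑ i ∈ Finset.range r, q i * g i + ∑ i ∈ Finset.Ico r m, q i * g i := by
    rw [hsplit, Finset.sum_union hdisj]
  have h1' : ∑ i ∈ Finset.range m, q i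
      = ∑ i ∈ Finset.range r, q i + ∑ i ∈ Finset.Ico r m, q i := by
    rw [hsplit, Finset.sum_union hdisj]
  have h2 : ∑ i ∈ Finset.Ico r m, q i * g i ≤ g r * ∑ i ∈ Finset.Ico r m, q i := by
    rw [Finset.mul_sum]
    refine Finset.sum_le_sum fun i hi => ?_
    have hri : r ≤ i := (Finset.mem_Ico.mp hi).1
    have := gm r i hri
    have := hq0 i
    nlinarith [g0 i]
  have h3 : ∑ i ∈ Finset.Ico r m, q i ≤ (r : ℝ) - ∑ i ∈ Finset.range r, q i := by
    have := hqs
    rw [h1'] at this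
    linarith
  have h4 : g r * ∑ i ∈ Finset.Ico r m, q i ≤ g r * ((r : ℝ) - ∑ i ∈ Finset.range r, q i) :=
    mul_le_mul_of_nonneg_left h3 (g0 r)
  have h5 : g r * ((r : ℝ) - ∑ i ∈ Finset.range r, q i)
      = ∑ i ∈ Finset.range r, g r * (1 - q i) := by
    simp only [mul_sub, mul_one, Finset.sum_sub_distrib, Finset.sum_const, Finset.card_range,
      nsmul_eq_mul, ← Finset.mul_sum]
    ring
  have h6 : ∑ i ∈ Finset.range r, (q i * g i + g r * (1 - q i)) ≤ ∑ i ∈ Finset.range r, g i := by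
    refine Finset.sum_le_sum fun i hi => ?_
    have hir : i ≤ r := le_of_lt (Finset.mem_range.mp hi)
    have hgr : g r ≤ g i := gm i r hir
    have := hq1 i
    have := hq0 i
    nlinarith
  calc ∑ i ∈ Finset.range m, q i * g i
      ≤ ∑ i ∈ Finset.range r, q i * g i + g r * ((r:ℝ) - ∑ i ∈ Finset.range r, q i) := by
        rw [h1]; linarith
    _ = ∑ i ∈ Finset.range r, (q i * g i + g r * (1 - q i)) := by
        rw [h5, Finset.sum_add_distrib]
    _ ≤ ∑ i ∈ Finset.range r, g i := h6

lemma eym_sq_le_self_imp_le_one {x : ℝ} (hx : x ^ 2 ≤ x) : x ≤ 1 := by nlinarith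

/-- Eckart–Young–Mirsky lower bound. If `D ∈ ℝ^{m×n}` has singular values
`σ_1 ≥ … ≥ σ_{min(m,n)} ≥ 0` (given via an SVD `D = U Σ Vᵀ`), then for every `r` with
`1 ≤ r ≤ min(m,n) - 1` and every `X` with `rank(X) ≤ r`,
`‖D - X‖_F² ≥ σ_{r+1}² + … + σ_{min(m,n)}²`. -/
theorem stmt_2 {m n : ℕ} (D : Matrix (Fin m) (Fin n) ℝ)
    (U : Matrix (Fin m) (Fin m) ℝ) (V : Matrix (Fin n) (Fin n) ℝ)
    (S : Matrix (Fin m) (Fin n) ℝ) (σ : ℕ → ℝ)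
    (hU : Uᵀ * U = 1) (hU' : U * Uᵀ = 1) (hV : Vᵀ * V = 1) (hV' : V * Vᵀ = 1)
    (hσdesc : ∀ i j : ℕ, i ≤ j → σ j ≤ σ i) (hσnonneg : ∀ i, 0 ≤ σ i)
    (hσzero : ∀ i, min m n ≤ i → σ i = 0)
    (hS : ∀ (i : Fin m) (j : Fin n), S i j = if (i : ℕ) = (j : ℕ) then σ (i : ℕ) else 0)
    (hD : D = U * S * Vᵀ)
    (r : ℕ) (hr1 : 1 ≤ r) (hr2 : r ≤ min m n - 1)
    (X : Matrix (Fin m) (Fin n) ℝ) (hX : X.rank ≤ r) :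
    ∑ i ∈ Finset.Ico r (min m n), σ i ^ 2 ≤ ∑ i, ∑ j, (D - X) i j ^ 2 := by
  classical
  -- basic numerology
  have hmin_pos : 1 ≤ min m n := le_trans hr1 (le_trans hr2 (Nat.sub_le _ _))
  have hrmin : r < min m n := by omega
  have hrm : r ≤ m := le_trans (le_of_lt hrmin) (Nat.min_le_left m n)
  -- column space of X as a submodule of Euclidean space
  set e : (Fin m → ℝ) ≃ₗ[ℝ] EuclideanSpace ℝ (Fin m) :=
    (WithLp.linearEquiv 2 ℝ (Fin m → ℝ)).symm with he
  set K0 : Submodule ℝ (Fin m → ℝ) := Submodule.span ℝ (Set.range Xᵀ) with hK0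
  set K : Submodule ℝ (EuclideanSpace ℝ (Fin m)) := K0.map (e : (Fin m → ℝ) →ₗ[ℝ] _) with hK
  have hfinK : Module.finrank ℝ K = X.rank := by
    rw [hK, LinearEquiv.finrank_map_eq, hK0, Matrix.rank_eq_finrank_span_cols]
    rfl
  set d : ℕ := Module.finrank ℝ K with hd
  have hdr : d ≤ r := by rw [show d = X.rank from hfinK]; exact hX
  set b : OrthonormalBasis (Fin d) ℝ K := stdOrthonormalBasis ℝ K with hb
  set A : Matrix (Fin m) (Fin d) ℝ :=
    Matrix.of (fun i k => ((b k : EuclideanSpace ℝ (Fin m)) : Fin m → ℝ) i) with hA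
  -- orthonormality of columns of A
  have hAA : Aᵀ * A = 1 := by
    ext k l
    have hinner := orthonormal_iff_ite.mp b.orthonormal k l
    rw [Submodule.coe_inner] at hinner
    simp only [PiLp.inner_apply, RCLike.inner_apply, starRingEnd_apply, star_trivial] at hinner
    simp only [Matrix.mul_apply, Matrix.transpose_apply, Matrix.one_apply, hA, Matrix.of_apply]
    convert hinner using 2
    ring
  -- every column of X is reproduced by the projection A * Aᵀ
  have hPX : A * (Aᵀ * X) = X := by
    ext i j
    have hmem : e (Xᵀ j) ∈ K := Submodule.mem_map_of_mem (Submodule.subset_span ⟨j, rfl⟩)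
    set v : K := ⟨e (Xᵀ j), hmem⟩ with hv
    have hrepr := b.sum_repr' v
    set L : K →ₗ[ℝ] ℝ := (EuclideanSpace.projₗ i).comp K.subtype with hL
    have h2 := congrArg L hrepr
    rw [map_sum] at h2
    simp only [_root_.map_smul, smul_eq_mul] at h2
    have hLb : ∀ k, L (b k) = ((b k : EuclideanSpace ℝ (Fin m)) : Fin m → ℝ) i := fun k => rfl
    have hLv : L v = X i j := rfl
    rw [hLv] at h2
    have hrepr3 : ∑ k : Fin d, (⟪b k, v⟫) * ((b k : EuclideanSpace ℝ (Fin m)) : Fin m → ℝ) i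
        = X i j := by
      rw [← h2]
      exact Finset.sum_congr rfl fun k _ => by rw [hLb k]
    simp only [Matrix.mul_apply, Matrix.transpose_apply, hA, Matrix.of_apply]
    rw [← hrepr3]
    refine Finset.sum_congr rfl fun k _ => ?_
    have hik : (⟪b k, v⟫) = ∑ i', ((b k : EuclideanSpace ℝ (Fin m)) : Fin m → ℝ) i' * X i' j := by
      rw [Submodule.coe_inner]
      simp only [PiLp.inner_apply, RCLike.inner_apply, starRingEnd_apply, star_trivial]
      exact Finset.sum_congr rfl fun x _ => mul_comm _ _
    rw [hik, Finset.sum_mul, Finset.mul_sum]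
    exact Finset.sum_congr rfl fun i' _ => by ring
  set P : Matrix (Fin m) (Fin m) ℝ := A * Aᵀ with hP
  have hPsymm : Pᵀ = P := by rw [hP, Matrix.transpose_mul, Matrix.transpose_transpose]
  have hPP : P * P = P := by
    rw [hP]
    calc A * Aᵀ * (A * Aᵀ) = A * ((Aᵀ * A) * Aᵀ) := by
          rw [Matrix.mul_assoc, ← Matrix.mul_assoc Aᵀ A Aᵀ]
      _ = A * Aᵀ := by rw [hAA, Matrix.one_mul]
  have hPXfull : P * X = X := by rw [hP, Matrix.mul_assoc, hPX]
  -- Frobenius norm squared as a trace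
  have Ftrace : ∀ {α β : Type} [Fintype α] [Fintype β] (M : Matrix α β ℝ),
      Matrix.trace (Mᵀ * M) = ∑ i, ∑ j, M i j ^ 2 := by
    intro α β _ _ M
    rw [Matrix.trace, Finset.sum_comm]
    refine Finset.sum_congr rfl fun i _ => ?_
    simp [Matrix.diag, Matrix.mul_apply, sq]
  -- cancellation helpers
  have hVcancel : ∀ {p : Type} (Z : Matrix (Fin n) p ℝ), Vᵀ * (V * Z) = Z := by
    intro p Z; rw [← Matrix.mul_assoc, hV, Matrix.one_mul]
  have hU'cancel : ∀ {p : Type} (Z : Matrix (Fin m) p ℝ), U * (Uᵀ * Z) = Z := by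
    intro p Z; rw [← Matrix.mul_assoc, hU', Matrix.one_mul]
  set M : Matrix (Fin m) (Fin n) ℝ := D - X with hM
  set N : Matrix (Fin m) (Fin m) ℝ := 1 - P with hN
  have hNsymm : Nᵀ = N := by rw [hN, Matrix.transpose_sub, Matrix.transpose_one, hPsymm]
  have hPN : P * N = 0 := by rw [hN, Matrix.mul_sub, Matrix.mul_one, hPP, sub_self]
  have hNP : N * P = 0 := by rw [hN, Matrix.sub_mul, Matrix.one_mul, hPP, sub_self]
  have hNN : N * N = N := by
    nth_rewrite 1 [hN]
    rw [Matrix.sub_mul, Matrix.one_mul, hPN, sub_zero]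
  have hNX : N * X = 0 := by rw [hN, Matrix.sub_mul, Matrix.one_mul, hPXfull, sub_self]
  have hMsplit : M = P * M + N * M := by
    rw [hN, Matrix.sub_mul, Matrix.one_mul]; abel
  have hcross1 : Matrix.trace ((P * M)ᵀ * (N * M)) = 0 := by
    rw [Matrix.transpose_mul, hPsymm, Matrix.mul_assoc Mᵀ P (N * M), ← Matrix.mul_assoc P N M,
      hPN, Matrix.zero_mul, Matrix.mul_zero, Matrix.trace_zero]
  have hcross2 : Matrix.trace ((N * M)ᵀ * (P * M)) = 0 := by
    rw [Matrix.transpose_mul, hNsymm, Matrix.mul_assoc Mᵀ N (P * M), ← Matrix.mul_assoc N P M,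
      hNP, Matrix.zero_mul, Matrix.mul_zero, Matrix.trace_zero]
  have hpyth : Matrix.trace (Mᵀ * M)
      = Matrix.trace ((P * M)ᵀ * (P * M)) + Matrix.trace ((N * M)ᵀ * (N * M)) := by
    conv_lhs => rw [hMsplit]
    rw [Matrix.transpose_add, Matrix.add_mul, Matrix.mul_add, Matrix.mul_add, Matrix.trace_add,
      Matrix.trace_add, Matrix.trace_add, hcross1, hcross2]
    ring
  have hPMnn : 0 ≤ Matrix.trace ((P * M)ᵀ * (P * M)) := by
    rw [Ftrace]; positivity
  have hlow : Matrix.trace ((N * M)ᵀ * (N * M)) ≤ Matrix.trace (Mᵀ * M) := by linarith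
  have hNM : N * M = N * D := by rw [hM, Matrix.mul_sub, hNX, sub_zero]
  have hPDtr : Matrix.trace ((P * D)ᵀ * (P * D)) = Matrix.trace (Dᵀ * (P * D)) := by
    rw [Matrix.transpose_mul, hPsymm, Matrix.mul_assoc Dᵀ P (P * D), ← Matrix.mul_assoc P P D, hPP]
  have hND : Matrix.trace ((N * D)ᵀ * (N * D))
      = Matrix.trace (Dᵀ * D) - Matrix.trace ((P * D)ᵀ * (P * D)) := by
    rw [hPDtr, Matrix.transpose_mul, hNsymm, Matrix.mul_assoc Dᵀ N (N * D),
      ← Matrix.mul_assoc N N D, hNN]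
    nth_rewrite 1 [hN]
    rw [Matrix.sub_mul, Matrix.one_mul, Matrix.mul_sub, Matrix.trace_sub]
  -- S * Sᵀ is diagonal with entries σ i ^ 2
  have hSSt : ∀ i i' : Fin m, (S * Sᵀ) i i' = if i = i' then σ (i : ℕ) ^ 2 else 0 := by
    intro i i'
    simp only [Matrix.mul_apply, Matrix.transpose_apply, hS]
    by_cases h : i = i'
    · subst h
      rw [if_pos rfl]
      by_cases hin : (i : ℕ) < n
      · rw [Finset.sum_eq_single (⟨(i : ℕ), hin⟩ : Fin n)]
        · simp [sq]
        · intro j _ hj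
          have : (i : ℕ) ≠ (j : ℕ) := fun hc => hj (by ext; simp [← hc])
          simp [this]
        · simp
      · have hz : σ (i : ℕ) = 0 := hσzero _ (le_trans (Nat.min_le_right m n) (not_lt.mp hin))
        rw [hz]
        rw [Finset.sum_eq_zero]
        · ring
        · intro j _
          have : (i : ℕ) ≠ (j : ℕ) := fun hc => hin (hc ▸ j.isLt)
          simp [this]
    · rw [if_neg h]
      refine Finset.sum_eq_zero fun j _ => ?_
      by_cases h1 : (i : ℕ) = (j : ℕ)
      · have h2 : (i' : ℕ) ≠ (j : ℕ) := fun hc => h (by ext; rw [h1, hc])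
        simp [h2]
      · simp [h1]
  have hDDt : D * Dᵀ = U * (S * Sᵀ) * Uᵀ := by
    rw [hD]
    simp only [Matrix.transpose_mul, Matrix.transpose_transpose, Matrix.mul_assoc]
    rw [hVcancel]
  have hFD : Matrix.trace (Dᵀ * D) = ∑ i : Fin m, σ (i : ℕ) ^ 2 := by
    rw [← Matrix.trace_mul_comm, hDDt, Matrix.trace_mul_comm (U * (S * Sᵀ)) Uᵀ,
      ← Matrix.mul_assoc, hU, Matrix.one_mul, Matrix.trace]
    refine Finset.sum_congr rfl fun i _ => ?_
    simp [Matrix.diag, hSSt i i]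
  -- the projected Gram matrix Q
  set W : Matrix (Fin m) (Fin d) ℝ := Uᵀ * A with hW
  set Q : Matrix (Fin m) (Fin m) ℝ := W * Wᵀ with hQ
  have hWt : Wᵀ = Aᵀ * U := by rw [hW, Matrix.transpose_mul, Matrix.transpose_transpose]
  have hWW : Wᵀ * W = 1 := by
    rw [hWt, hW, Matrix.mul_assoc, hU'cancel, hAA]
  have hQsymm : Qᵀ = Q := by rw [hQ, Matrix.transpose_mul, Matrix.transpose_transpose]
  have hQQ : Q * Q = Q := by
    rw [hQ]
    calc W * Wᵀ * (W * Wᵀ) = W * ((Wᵀ * W) * Wᵀ) := by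
          rw [Matrix.mul_assoc, ← Matrix.mul_assoc Wᵀ W Wᵀ]
      _ = W * Wᵀ := by rw [hWW, Matrix.one_mul]
  have hq0 : ∀ i, 0 ≤ Q i i := by
    intro i
    rw [hQ]
    simp only [Matrix.mul_apply, Matrix.transpose_apply]
    exact Finset.sum_nonneg fun k _ => mul_self_nonneg _
  have hq1 : ∀ i, Q i i ≤ 1 := by
    intro i
    have h1 : Q i i = ∑ k, Q i k ^ 2 := by
      conv_lhs => rw [← hQQ]
      simp only [Matrix.mul_apply]
      refine Finset.sum_congr rfl fun k _ => ?_
      have : Q k i = Q i k := by conv_rhs => rw [← hQsymm, Matrix.transpose_apply]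
      rw [this, sq]
    have h2 : Q i i ^ 2 ≤ ∑ k, Q i k ^ 2 :=
      Finset.single_le_sum (f := fun k => Q i k ^ 2) (fun k _ => sq_nonneg _)
        (Finset.mem_univ i)
    have h3 : Q i i ^ 2 ≤ Q i i := by rw [← h1] at h2; exact h2
    exact eym_sq_le_self_imp_le_one h3
  have hqtr : ∑ i, Q i i = (d : ℝ) := by
    have h0 : Matrix.trace Q = (d : ℝ) := by
      rw [hQ, Matrix.trace_mul_comm, hWW, Matrix.trace_one]
      simp
    rw [← h0, Matrix.trace]
    simp [Matrix.diag]
  have hQUPU : Q = Uᵀ * (P * U) := by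
    rw [hQ, hWt, hW, hP]; simp only [Matrix.mul_assoc]
  have hFPD : Matrix.trace ((P * D)ᵀ * (P * D)) = ∑ i : Fin m, Q i i * σ (i : ℕ) ^ 2 := by
    have h3 : Matrix.trace ((P * D)ᵀ * (P * D)) = Matrix.trace (Q * (S * Sᵀ)) := by
      rw [hPDtr, Matrix.trace_mul_comm, Matrix.mul_assoc, hDDt,
        ← Matrix.mul_assoc P (U * (S * Sᵀ)) Uᵀ, Matrix.trace_mul_comm,
        ← Matrix.mul_assoc P U (S * Sᵀ), ← Matrix.mul_assoc Uᵀ (P * U) (S * Sᵀ), ← hQUPU]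
    have h4 : ∀ i : Fin m, (Q * (S * Sᵀ)) i i = Q i i * σ (i : ℕ) ^ 2 := by
      intro i
      simp [Matrix.mul_apply, hSSt, mul_ite, mul_zero]
    rw [h3, Matrix.trace]
    simp only [Matrix.diag]
    exact Finset.sum_congr rfl fun i _ => h4 i
  -- combinatorial bound
  set q : ℕ → ℝ := fun i => if h : i < m then Q ⟨i, h⟩ ⟨i, h⟩ else 0 with hq
  have hsum_q : ∑ i ∈ Finset.range m, q i = (d : ℝ) := by
    rw [← Fin.sum_univ_eq_sum_range q m, ← hqtr]
    exact Finset.sum_congr rfl fun i _ => by simp [hq, i.isLt]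
  have hkey : ∑ i ∈ Finset.range m, q i * σ i ^ 2 ≤ ∑ i ∈ Finset.range r, σ i ^ 2 := by
    refine eym_key_sum m r hrm q (fun i => σ i ^ 2) ?_ ?_ ?_ ?_ ?_
    · intro i; rw [hq]; dsimp only; split
      · exact hq0 _
      · exact le_refl 0
    · intro i; rw [hq]; dsimp only; split
      · exact hq1 _
      · exact zero_le_one
    · rw [hsum_q]; exact_mod_cast hdr
    · intro i j hij
      exact pow_le_pow_left₀ (hσnonneg j) (hσdesc i j hij) 2
    · intro i; positivity
  have hQσ : ∑ i : Fin m, Q i i * σ (i : ℕ) ^ 2 ≤ ∑ i ∈ Finset.range r, σ i ^ 2 := by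
    have he1 : ∑ i : Fin m, Q i i * σ (i : ℕ) ^ 2 = ∑ i ∈ Finset.range m, q i * σ i ^ 2 := by
      rw [← Fin.sum_univ_eq_sum_range (fun i => q i * σ i ^ 2) m]
      exact Finset.sum_congr rfl fun i _ => by simp [hq, i.isLt]
    rw [he1]; exact hkey
  have hFin : ∑ i : Fin m, σ (i : ℕ) ^ 2 = ∑ i ∈ Finset.range m, σ i ^ 2 :=
    Fin.sum_univ_eq_sum_range (fun i => σ i ^ 2) m
  have hsplit2 : ∑ i ∈ Finset.range m, σ i ^ 2
      = ∑ i ∈ Finset.range r, σ i ^ 2 + ∑ i ∈ Finset.Ico r m, σ i ^ 2 := by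
    rw [Finset.range_eq_Ico, Finset.range_eq_Ico]
    exact (Finset.sum_Ico_consecutive _ (Nat.zero_le r) hrm).symm
  have hIcosplit : ∑ i ∈ Finset.Ico r m, σ i ^ 2
      = ∑ i ∈ Finset.Ico r (min m n), σ i ^ 2 + ∑ i ∈ Finset.Ico (min m n) m, σ i ^ 2 :=
    (Finset.sum_Ico_consecutive _ (le_of_lt hrmin) (Nat.min_le_left m n)).symm
  have hIcozero : ∑ i ∈ Finset.Ico (min m n) m, σ i ^ 2 = 0 :=
    Finset.sum_eq_zero fun i hi => by
      rw [hσzero i (Finset.mem_Ico.mp hi).1]; ring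
  have hNM' : Matrix.trace ((N * M)ᵀ * (N * M)) = Matrix.trace ((N * D)ᵀ * (N * D)) := by
    rw [hNM]
  have hRHS : ∑ i, ∑ j, M i j ^ 2 = Matrix.trace (Mᵀ * M) := (Ftrace M).symm
  rw [hRHS]
  linarith [hlow, hND, hFD, hFPD, hQσ, hFin, hsplit2, hIcosplit, hIcozero, hNM']
end
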